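/- arXiv:1703.03575 — 3 statements merged into one kernel-verified Lean document; each statement's English description precedes it below -/
import Mathlib

section
/- For every d ≥ 1 and real δ with 0 < δ ≤ 1, the Chebyshev polynomial of the first kind satisfies T_d(1 + δ) ≥ (1/2)·(1 + √(2δ))^d, and in particular T_d(1+δ) ≥ (1/2)·e^{d√δ/2}. -/
open Polynomial Chebyshev Real

lemma cheb_closed (x : ℝ) (hx : 1 ≤ x) (n : ℕ) :
    (Polynomial.Chebyshev.T ℝ n).eval x
      = ((x + Real.sqrt (x^2 - 1))^n + (x - Real.sqrt (x^2 - 1))^n) / 2 := by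
  set s := Real.sqrt (x^2 - 1) with hs
  have hs2 : s^2 = x^2 - 1 := Real.sq_sqrt (by nlinarith)
  induction n using Nat.twoStepInduction with
  | zero => simp
  | one => simp
  | more n ih1 ih2 =>
    have : ((n:ℤ) + 2) = ((n+2 : ℕ) : ℤ) := by push_cast; ring
    rw [show ((n+2:ℕ):ℤ) = (n:ℤ) + 2 by push_cast; ring,
      Polynomial.Chebyshev.T_add_two]
    simp only [Polynomial.eval_sub, Polynomial.eval_mul, Polynomial.eval_ofNat,
      Polynomial.eval_X]
    rw [show ((n:ℤ)+1) = ((n+1:ℕ):ℤ) by push_cast; ring] at *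
    rw [ih1, ih2]
    have h1 : (x + s)^(n+2) = 2*x*(x+s)^(n+1) - (x+s)^n := by
      have : (x+s)^2 = 2*x*(x+s) - 1 := by nlinarith
      calc (x + s)^(n+2) = (x+s)^n * (x+s)^2 := by ring
      _ = 2*x*(x+s)^(n+1) - (x+s)^n := by rw [this]; ring
    have h2 : (x - s)^(n+2) = 2*x*(x-s)^(n+1) - (x-s)^n := by
      have : (x-s)^2 = 2*x*(x-s) - 1 := by nlinarith
      calc (x - s)^(n+2) = (x-s)^n * (x-s)^2 := by ring
      _ = 2*x*(x-s)^(n+1) - (x-s)^n := by rw [this]; ring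
    rw [h1, h2]; ring

/-- **Growth of Chebyshev polynomials outside `[-1,1]`.** For `d ≥ 1` and `0 < δ ≤ 1`,
`T_d(1+δ) ≥ (1/2)(1+√(2δ))^d`, and in particular `T_d(1+δ) ≥ (1/2) e^{d√δ/2}`. -/
theorem chebyshev_growth (d : ℕ) (δ : ℝ) (hd : 1 ≤ d) (hδ0 : 0 < δ) (hδ1 : δ ≤ 1) :
    (1 / 2 : ℝ) * (1 + Real.sqrt (2 * δ)) ^ d ≤
        (Polynomial.Chebyshev.T ℝ d).eval (1 + δ) ∧
    (1 / 2 : ℝ) * Real.exp (d * Real.sqrt δ / 2) ≤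
        (Polynomial.Chebyshev.T ℝ d).eval (1 + δ) := by
  have hx : (1:ℝ) ≤ 1 + δ := by linarith
  have key := cheb_closed (1+δ) hx d
  set s := Real.sqrt ((1+δ)^2 - 1) with hs
  have hs0 : 0 ≤ s := Real.sqrt_nonneg _
  have hsle : s ≤ 1 + δ := by
    rw [hs]
    calc Real.sqrt ((1+δ)^2 - 1) ≤ Real.sqrt ((1+δ)^2) :=
          Real.sqrt_le_sqrt (by nlinarith)
      _ = 1 + δ := Real.sqrt_sq (by linarith)
  have hsge : Real.sqrt (2*δ) ≤ s := Real.sqrt_le_sqrt (by nlinarith)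
  have h1 : (1/2:ℝ) * (1 + Real.sqrt (2*δ))^d ≤ (Polynomial.Chebyshev.T ℝ d).eval (1+δ) := by
    rw [key]
    have hv : (0:ℝ) ≤ (1 + δ - s)^d := pow_nonneg (by linarith) d
    have hu : (1 + Real.sqrt (2*δ))^d ≤ (1 + δ + s)^d :=
      pow_le_pow_left₀ (by positivity) (by linarith) d
    linarith
  refine ⟨h1, le_trans ?_ h1⟩
  have ha1 : Real.sqrt δ ≤ 1 := by
    rw [show (1:ℝ) = Real.sqrt 1 by simp]; exact Real.sqrt_le_sqrt hδ1
  have ha0 : 0 ≤ Real.sqrt δ := Real.sqrt_nonneg _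
  set a := Real.sqrt δ
  have h2 : Real.sqrt (2*δ) = Real.sqrt 2 * a := Real.sqrt_mul (by norm_num) δ
  have hr2 : (1:ℝ) ≤ Real.sqrt 2 := by
    rw [show (1:ℝ) = Real.sqrt 1 by simp]; exact Real.sqrt_le_sqrt (by norm_num)
  have hr2' : Real.sqrt 2 * Real.sqrt 2 = 2 := Real.mul_self_sqrt (by norm_num)
  have hexp : Real.exp (a/2) ≤ 1 + Real.sqrt (2*δ) := by
    have hb : 1 - a/2 ≤ Real.exp (-(a/2)) := by
      have := Real.add_one_le_exp (-(a/2)); linarith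
    have hpos : (0:ℝ) < 1 - a/2 := by linarith
    have hmul : Real.exp (a/2) * (1 - a/2) ≤ 1 := by
      calc Real.exp (a/2) * (1 - a/2) ≤ Real.exp (a/2) * Real.exp (-(a/2)) :=
            mul_le_mul_of_nonneg_left hb (Real.exp_pos _).le
        _ = 1 := by rw [← Real.exp_add]; simp
    have hdiv : Real.exp (a/2) ≤ 1/(1 - a/2) := by
      rw [le_div_iff₀ hpos]; exact hmul
    have hdiv2 : 1/(1 - a/2) ≤ 1 + Real.sqrt (2*δ) := by
      rw [h2, div_le_iff₀ hpos]
      have haa : a*a ≤ a := by nlinarith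
      have t1 : Real.sqrt 2 * (a*a) ≤ Real.sqrt 2 * a :=
        mul_le_mul_of_nonneg_left haa (by positivity)
      have t2 : 1*a ≤ Real.sqrt 2 * a := mul_le_mul_of_nonneg_right hr2 ha0
      nlinarith [t1, t2]
    linarith
  have hpow : Real.exp ((d:ℝ) * a / 2) ≤ (1 + Real.sqrt (2*δ))^d := by
    have : (d:ℝ) * a / 2 = (d:ℕ) * (a/2) := by push_cast; ring
    rw [this, Real.exp_nat_mul]
    exact pow_le_pow_left₀ (Real.exp_pos _).le hexp d
  linarith
end

section
/- The Peak-to-Average Lemma is tight in the following sense: for infinitely many k and appropriate ε, there exists a function f : {0,1}^k → ℝ with ∑_z |f(z)| ≤ 1 and max_z |f(z)| ≥ ε, such that for every subset Y of coordinates with |Y| = o(√(k·log(1/ε))), one has ∑_{y ∈ {0,1}^Y} |∑_{z : z|_Y = y} f(z)| = 0. -/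
noncomputable def sgnB : Bool → ℝ := fun b => if b then -1 else 1

lemma abs_sgnB (b : Bool) : |sgnB b| = 1 := by cases b <;> simp [sgnB]

lemma sgnB_not (b : Bool) : sgnB (!b) = - sgnB b := by cases b <;> simp [sgnB]

open Classical in
/-- **Tightness of the Peak-to-Average Lemma.** There is a constant `c > 0` such that for
infinitely many `k` there are `ε ∈ (0,1]` and `f : {0,1}^k → ℝ` with `∑ |f| ≤ 1` and a peak
`|f(z*)| ≥ ε`, yet every coordinate set `Y` of size at most `c·√(k log(1/ε))` has identically
vanishing aggregate marginal bias. -/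
theorem peak_to_average_tight :
    ∃ c : ℝ, 0 < c ∧
      ∀ K : ℕ, ∃ k : ℕ, K ≤ k ∧
        ∃ ε : ℝ, 0 < ε ∧ ε ≤ 1 ∧
          ∃ f : (Fin k → Bool) → ℝ,
            (∑ z : Fin k → Bool, |f z|) ≤ 1 ∧
            (∃ z : Fin k → Bool, ε ≤ |f z|) ∧
            ∀ Y : Finset (Fin k),
              (Y.card : ℝ) ≤ c * Real.sqrt (k * Real.log (1 / ε)) →
              (∑ y : (↥Y → Bool),
                |∑ z ∈ Finset.univ.filter
                    (fun z : Fin k → Bool => ∀ i : ↥Y, z i.1 = y i), f z|) = 0 := by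
  refine ⟨1/2, by norm_num, fun K => ?_⟩
  set k := max K 1 with hk
  have hk1 : 1 ≤ k := le_max_right K 1
  have h2k : (1:ℝ) ≤ 2 ^ k := one_le_pow₀ (by norm_num)
  have h2kpos : (0:ℝ) < 2 ^ k := by positivity
  refine ⟨k, le_max_left K 1, (2 ^ k)⁻¹, by positivity, inv_le_one_of_one_le₀ h2k, ?_⟩
  set f : (Fin k → Bool) → ℝ := fun z => (∏ j, sgnB (z j)) * (2 ^ k)⁻¹ with hf
  have habs : ∀ z, |f z| = (2 ^ k)⁻¹ := by
    intro z
    rw [hf]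
    rw [abs_mul, Finset.abs_prod]
    simp [abs_sgnB, abs_of_pos (inv_pos.2 h2kpos)]
  refine ⟨f, ?_, ⟨fun _ => true, le_of_eq (habs _).symm⟩, ?_⟩
  · rw [Finset.sum_congr rfl (fun z _ => habs z)]
    rw [Finset.sum_const, Finset.card_univ]
    have : Fintype.card (Fin k → Bool) = 2 ^ k := by simp
    rw [this]
    simp [mul_inv_cancel₀ (ne_of_gt h2kpos)]
  · intro Y hY
    -- simplify the bound
    have hlog : Real.log (1 / ((2:ℝ) ^ k)⁻¹) = k * Real.log 2 := by
      rw [one_div, inv_inv, Real.log_pow]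
    have hsqrt : Real.sqrt ((k : ℝ) * ((k:ℝ) * Real.log 2)) = k * Real.sqrt (Real.log 2) := by
      rw [← mul_assoc]
      rw [show (k:ℝ) * k = (k:ℝ)^2 by ring, Real.sqrt_mul (by positivity), Real.sqrt_sq (by positivity)]
    have hlog2 : Real.sqrt (Real.log 2) ≤ 1 := by
      rw [show (1:ℝ) = Real.sqrt 1 by simp]
      exact Real.sqrt_le_sqrt (le_of_lt (by
        calc Real.log 2 < 0.6931471808 := Real.log_two_lt_d9
        _ < 1 := by norm_num))
    have hYk : Y.card < k := by
      rw [hlog, hsqrt] at hY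
      have : (Y.card : ℝ) ≤ (1/2) * (k * 1) := by
        calc (Y.card : ℝ) ≤ 1/2 * ((k:ℝ) * Real.sqrt (Real.log 2)) := hY
        _ ≤ 1/2 * ((k:ℝ) * 1) := by
            apply mul_le_mul_of_nonneg_left _ (by norm_num)
            exact mul_le_mul_of_nonneg_left hlog2 (by positivity)
      have hk' : (Y.card : ℝ) < k := by
        have hkpos : (1:ℝ) ≤ (k:ℝ) := by exact_mod_cast hk1
        nlinarith
      exact_mod_cast hk'
    obtain ⟨i, hi⟩ : ∃ i : Fin k, i ∉ Y := by
      by_contra h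
      push_neg at h
      have : Y = Finset.univ := Finset.eq_univ_iff_forall.2 h
      rw [this, Finset.card_univ, Fintype.card_fin] at hYk
      exact lt_irrefl _ hYk
    apply Finset.sum_eq_zero
    intro y _
    have hzero : (∑ z ∈ Finset.univ.filter
        (fun z : Fin k → Bool => ∀ j : ↥Y, z j.1 = y j), f z) = 0 := by
      apply Finset.sum_involution (fun z _ => Function.update z i (!z i))
      · intro z hz
        have hkey : f (Function.update z i (!z i)) = - f z := by
          show (∏ j, sgnB (Function.update z i (!z i) j)) * (2 ^ k)⁻¹ =
            -((∏ j, sgnB (z j)) * (2 ^ k)⁻¹)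
          have hprod : (∏ j, sgnB (Function.update z i (!z i) j)) = - ∏ j, sgnB (z j) := by
            have h1 : (fun j => sgnB (Function.update z i (!z i) j)) =
                Function.update (fun j => sgnB (z j)) i (sgnB (!z i)) := by
              funext j
              by_cases hj : j = i
              · subst hj; simp
              · simp [Function.update_of_ne hj]
            rw [h1, Finset.prod_update_of_mem (Finset.mem_univ i), sgnB_not,
              Finset.prod_eq_mul_prod_sdiff_singleton_of_mem (Finset.mem_univ i) (fun j => sgnB (z j))]
            ring
          rw [hprod]; ring
        rw [hkey]; ring
      · intro z hz hne
        intro habs'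
        have := congrFun habs' i
        simp at this
      · intro z hz
        funext j
        by_cases hj : j = i
        · subst hj; simp
        · simp [Function.update_of_ne hj]
      · intro z hz
        simp only [Finset.mem_filter, Finset.mem_univ, true_and] at hz ⊢
        intro j
        have hji : (j : Fin k) ≠ i := fun h => hi (h ▸ j.2)
        rw [Function.update_of_ne hji]
        exact hz j
    rw [hzero, abs_zero]
end

section
/- Let X and B be random variables on a finite probability space, with B uniform on {0,1}. Suppose there is a value z* with P[X = z*] ≥ ε and H(B | X = z*) = 0. Then the mutual information I(B ; X) ≥ ε·(1 − H_b(1/2 − ε/2)) > 0; in particular H(B | X) ≤ 1 − Ω(ε²). -/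
open Classical

/-- Probability of an event under a mass function on a finite space. -/
noncomputable def prE {Ω : Type} [Fintype Ω] (μ : Ω → ℝ) (E : Ω → Prop) : ℝ :=
  ∑ ω, if E ω then μ ω else 0

/-- Binary entropy function (base 2). -/
noncomputable def binEnt (p : ℝ) : ℝ :=
  -(p * Real.logb 2 p) - (1 - p) * Real.logb 2 (1 - p)

/-- Conditional probability `P[B = true | X = x]`. -/
noncomputable def condP {Ω S : Type} [Fintype Ω] (μ : Ω → ℝ) (B : Ω → Bool) (X : Ω → S)
    (x : S) : ℝ :=
  prE μ (fun ω => B ω = true ∧ X ω = x) / prE μ (fun ω => X ω = x)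

/-- Conditional Shannon entropy `H(B | X)` (base 2) of a bit `B` given `X`. -/
noncomputable def condEnt {Ω S : Type} [Fintype Ω] [Fintype S] (μ : Ω → ℝ) (B : Ω → Bool)
    (X : Ω → S) : ℝ :=
  ∑ x : S, prE μ (fun ω => X ω = x) * binEnt (condP μ B X x)


lemma binEnt_eq (p : ℝ) : binEnt p = Real.binEntropy p / Real.log 2 := by
  simp [binEnt, Real.binEntropy, Real.logb]; ring

lemma binEnt_le_one (p : ℝ) : binEnt p ≤ 1 := by
  rw [binEnt_eq, div_le_one (Real.log_pos (by norm_num))]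
  exact Real.binEntropy_le_log_two

lemma binEnt_nonneg {p : ℝ} (h0 : 0 ≤ p) (h1 : p ≤ 1) : 0 ≤ binEnt p := by
  rw [binEnt_eq]
  exact div_nonneg (Real.binEntropy_nonneg h0 h1) (Real.log_nonneg (by norm_num))

lemma prE_nonneg {Ω : Type} [Fintype Ω] {μ : Ω → ℝ} (hμ : ∀ ω, 0 ≤ μ ω) (E : Ω → Prop) :
    0 ≤ prE μ E :=
  Finset.sum_nonneg fun ω _ => by by_cases h : E ω <;> simp [prE, h, hμ ω]

lemma prE_mono {Ω : Type} [Fintype Ω] {μ : Ω → ℝ} (hμ : ∀ ω, 0 ≤ μ ω) {E F : Ω → Prop}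
    (h : ∀ ω, E ω → F ω) : prE μ E ≤ prE μ F := by
  apply Finset.sum_le_sum
  intro ω _
  by_cases hE : E ω
  · simp [hE, h ω hE]
  · by_cases hF : F ω <;> simp [hE, hF, hμ ω]

lemma prE_le_one {Ω : Type} [Fintype Ω] {μ : Ω → ℝ} (hμ : ∀ ω, 0 ≤ μ ω)
    (hs : (∑ ω, μ ω) = 1) (E : Ω → Prop) : prE μ E ≤ 1 := by
  rw [← hs]
  apply Finset.sum_le_sum
  intro ω _
  by_cases h : E ω <;> simp [h, hμ ω]

lemma condP_mem {Ω S : Type} [Fintype Ω] {μ : Ω → ℝ} (hμ : ∀ ω, 0 ≤ μ ω) (B : Ω → Bool)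
    (X : Ω → S) (x : S) : 0 ≤ condP μ B X x ∧ condP μ B X x ≤ 1 := by
  have h1 : 0 ≤ prE μ (fun ω => B ω = true ∧ X ω = x) := prE_nonneg hμ _
  have h2 : prE μ (fun ω => B ω = true ∧ X ω = x) ≤ prE μ (fun ω => X ω = x) :=
    prE_mono hμ fun ω h => h.2
  have h3 : 0 ≤ prE μ (fun ω => X ω = x) := prE_nonneg hμ _
  rcases eq_or_lt_of_le h3 with h | h
  · simp [condP, ← h]
  · exact ⟨div_nonneg h1 h3, (div_le_one h).2 h2⟩

lemma sum_prE_eq_one {Ω S : Type} [Fintype Ω] [Fintype S] {μ : Ω → ℝ}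
    (hs : (∑ ω, μ ω) = 1) (X : Ω → S) :
    ∑ x : S, prE μ (fun ω => X ω = x) = 1 := by
  rw [← hs]
  unfold prE
  rw [Finset.sum_comm]
  exact Finset.sum_congr rfl fun ω _ => by simp

/-- If a uniform bit `B` is determined on an event `{X = z*}` of probability at least `ε`, then
`I(B;X) = 1 - H(B|X) ≥ ε (1 - H_b(1/2 - ε/2)) > 0`; in particular `H(B|X) ≤ 1 - Ω(ε²)`. -/
theorem info_from_rare_determined_event :
    ∃ c : ℝ, 0 < c ∧
      ∀ (Ω S : Type) [Fintype Ω] [Fintype S] (μ : Ω → ℝ) (B : Ω → Bool) (X : Ω → S)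
        (ε : ℝ) (zs : S),
        (∀ ω, 0 ≤ μ ω) → (∑ ω, μ ω) = 1 →
        prE μ (fun ω => B ω = true) = 1 / 2 →
        0 < ε → ε ≤ prE μ (fun ω => X ω = zs) →
        binEnt (condP μ B X zs) = 0 →
        (ε * (1 - binEnt (1 / 2 - ε / 2)) ≤ 1 - condEnt μ B X ∧
          0 < 1 - condEnt μ B X ∧
          condEnt μ B X ≤ 1 - c * ε ^ 2) := by
  refine ⟨1, one_pos, ?_⟩
  intro Ω S _ _ μ B X ε zs hμ hs _ hε hεz hz
  have hε1 : ε ≤ 1 := hεz.trans (prE_le_one hμ hs _)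
  set p : S → ℝ := fun x => prE μ (fun ω => X ω = x) with hp
  have hpn : ∀ x, 0 ≤ p x := fun x => prE_nonneg hμ _
  have hsum : ∑ x, p x = 1 := sum_prE_eq_one hs X
  have hmain : condEnt μ B X ≤ 1 - ε := by
    have hterm : ∀ x : S, p x * binEnt (condP μ B X x) ≤ p x - (if x = zs then p x else 0) := by
      intro x
      by_cases h : x = zs
      · subst h; simp [hz]
      · simp only [h, if_false, sub_zero]
        have := condP_mem hμ B X x
        calc p x * binEnt (condP μ B X x) ≤ p x * 1 :=
              mul_le_mul_of_nonneg_left (binEnt_le_one _) (hpn x)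
          _ = p x := mul_one _
    calc condEnt μ B X ≤ ∑ x, (p x - (if x = zs then p x else 0)) :=
          Finset.sum_le_sum fun x _ => hterm x
      _ = (∑ x, p x) - ∑ x, (if x = zs then p x else 0) := by rw [Finset.sum_sub_distrib]
      _ = 1 - p zs := by rw [hsum, Finset.sum_ite_eq' Finset.univ zs p]; simp
      _ ≤ 1 - ε := by linarith [hεz]
  have hb0 : 0 ≤ binEnt (1 / 2 - ε / 2) := binEnt_nonneg (by linarith) (by linarith)
  refine ⟨?_, by linarith, ?_⟩
  · nlinarith [binEnt_le_one (1 / 2 - ε / 2)]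
  · nlinarith
end
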